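/- arXiv:1807.09044 — 2 statements merged into one kernel-verified Lean document; each statement's English description precedes it below -/
import Mathlib

section
/- Lower bound on energy-not-served via the energy gap at a single power level: let P^r be a reference with E-p transform E_{P^r}, and let Ω be a capacity curve. Suppose g is any output signal with g(t) ≤ P^r(t) pointwise and E_g(p) ≤ Ω(p) for all p ≥ 0 (feasibility). Then for every p* ≥ 0, Γ(g, P^r) = E_{P^r}(0) − E_g(0) ≥ E_{P^r}(p*) − Ω(p*). -/
/-! Since `x ↦ max (x - p) 0` is monotone and `1`-Lipschitz, lowering `Pʳ` to `g` lowers the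
energy above `p` by at most the energy removed in total, `Γ(g, Pʳ)`; feasibility bounds the
energy of `g` above `p` by `Ω(p)`. -/

open MeasureTheory

section EnergyTransform

variable {α : Type*} [MeasurableSpace α] {μ : Measure α} {f g : α → ℝ} {p : ℝ}

theorem MeasureTheory.Integrable.max_sub_const_zero (hf : Integrable f μ) (hp : 0 ≤ p) :
    Integrable (fun t => max (f t - p) 0) μ := by
  refine hf.mono ((hf.aestronglyMeasurable.sub aestronglyMeasurable_const).sup
    aestronglyMeasurable_const) (Filter.Eventually.of_forall fun t => ?_)
  rw [Real.norm_of_nonneg (le_max_right _ _)]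
  exact max_le (by linarith [Real.le_norm_self (f t)]) (norm_nonneg _)

theorem max_sub_const_zero_sub_le {a b : ℝ} (hba : b ≤ a) (p : ℝ) :
    max (a - p) 0 - max (b - p) 0 ≤ a - b :=
  calc max (a - p) 0 - max (b - p) 0 ≤ max (a - p - (b - p)) (0 - 0) :=
        max_sub_max_le_max _ _ _ _
    _ = a - b := by rw [sub_sub_sub_cancel_right, sub_self, max_eq_left (sub_nonneg.2 hba)]

theorem integral_max_sub_const_zero_sub_le (hf : Integrable f μ) (hg : Integrable g μ)
    (hgf : ∀ᵐ t ∂μ, g t ≤ f t) (hp : 0 ≤ p) :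
    ∫ t, max (f t - p) 0 ∂μ - ∫ t, max (g t - p) 0 ∂μ ≤ ∫ t, (f t - g t) ∂μ := by
  rw [← integral_sub (hf.max_sub_const_zero hp) (hg.max_sub_const_zero hp)]
  exact integral_mono_ae ((hf.max_sub_const_zero hp).sub (hg.max_sub_const_zero hp))
    (hf.sub hg) (hgf.mono fun t ht => max_sub_const_zero_sub_le ht p)

end EnergyTransform

theorem ens_lower_bound_energy_gap_general (Pr g Ω : ℝ → ℝ)
    (hPnonneg : ∀ t, 0 ≤ Pr t) (hgnonneg : ∀ t, 0 ≤ g t)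
    (hle : ∀ t, g t ≤ Pr t)
    (hPint : IntegrableOn Pr (Set.Ioi 0)) (hgint : IntegrableOn g (Set.Ioi 0))
    (hfeas : ∀ p : ℝ, 0 ≤ p →
      (∫ t in Set.Ioi (0 : ℝ), max (g t - p) 0) ≤ Ω p) :
    (∫ t in Set.Ioi (0 : ℝ), (Pr t - g t))
      = (∫ t in Set.Ioi (0 : ℝ), max (Pr t - 0) 0)
        - (∫ t in Set.Ioi (0 : ℝ), max (g t - 0) 0) ∧
    ∀ pstar : ℝ, 0 ≤ pstar →
      (∫ t in Set.Ioi (0 : ℝ), max (Pr t - pstar) 0) - Ω pstar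
        ≤ ∫ t in Set.Ioi (0 : ℝ), (Pr t - g t) := by
  refine ⟨?_, fun p hp => ?_⟩
  · simp only [sub_zero, max_eq_left (hPnonneg _), max_eq_left (hgnonneg _)]
    exact integral_sub hPint hgint
  · linarith [hfeas p hp, integral_max_sub_const_zero_sub_le hPint hgint
      (Filter.Eventually.of_forall hle) hp]

/-- Lower bound on energy-not-served via the energy gap at a single power
level: if `g ≤ Pʳ` pointwise and `E_g(p) ≤ Ω(p)` for all `p ≥ 0`, then
`Γ(g, Pʳ) = E_{Pʳ}(0) − E_g(0) ≥ E_{Pʳ}(p*) − Ω(p*)` for every `p* ≥ 0`. -/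
theorem ens_lower_bound_energy_gap (Pr g Ω : ℝ → ℝ)
    (hPmeas : Measurable Pr) (hgmeas : Measurable g)
    (hPnonneg : ∀ t, 0 ≤ Pr t) (hgnonneg : ∀ t, 0 ≤ g t)
    (hle : ∀ t, g t ≤ Pr t)
    (hPint : IntegrableOn Pr (Set.Ioi 0)) (hgint : IntegrableOn g (Set.Ioi 0))
    (hfeas : ∀ p : ℝ, 0 ≤ p →
      (∫ t in Set.Ioi (0 : ℝ), max (g t - p) 0) ≤ Ω p) :
    (∫ t in Set.Ioi (0 : ℝ), (Pr t - g t))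
      = (∫ t in Set.Ioi (0 : ℝ), max (Pr t - 0) 0)
        - (∫ t in Set.Ioi (0 : ℝ), max (g t - 0) 0) ∧
    ∀ pstar : ℝ, 0 ≤ pstar →
      (∫ t in Set.Ioi (0 : ℝ), max (Pr t - pstar) 0) - Ω pstar
        ≤ ∫ t in Set.Ioi (0 : ℝ), (Pr t - g t) :=
  ens_lower_bound_energy_gap_general Pr g Ω hPnonneg hgnonneg hle hPint hgint hfeas
end

section
/- Feasibility and exact delivery of the constant-input discrete policy: with ẑ = inf{x̂ ≥ 0 : Σᵢ p̄ᵢ max{min{xᵢ − x̂, Δt}, 0} ≤ P^r Δt} and inputs uᵢ = p̄ᵢ · max{min{(xᵢ − ẑ)/Δt, 1}, 0}, we have (i) 0 ≤ uᵢ ≤ p̄ᵢ for all i, (ii) the final state zᵢ = xᵢ − uᵢ Δt / p̄ᵢ satisfies zᵢ = min{max{xᵢ − Δt, ẑ}, xᵢ} ≥ 0, and (iii) if Σᵢ p̄ᵢ min{xᵢ, Δt} ≥ P^r Δt then Σᵢ uᵢ = P^r, otherwise Σᵢ uᵢ = Σᵢ p̄ᵢ min{xᵢ, Δt}/Δt (the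 maximum deliverable average power). -/
open Finset Filter Topology

/-! `F z = Σᵢ p̄ᵢ clip (xᵢ − z)` is the energy delivered within `Δt` by driving every
device down to the level `z`, and the policy's inputs are `uᵢ Δt = p̄ᵢ clip (xᵢ − ẑ)`,
so `Σᵢ uᵢ Δt = F ẑ`. `F` is continuous and vanishes for large `z`, so the infimum `ẑ` is
attained; if `ẑ > 0`, continuity forbids `F ẑ < Pʳ Δt`, hence `F ẑ = Pʳ Δt`. Otherwise
`ẑ = 0` and every device runs for `min xᵢ Δt`. -/

noncomputable def sublevelThreshold (f : ℝ → ℝ) (c : ℝ) : ℝ :=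
  sInf {z | 0 ≤ z ∧ f z ≤ c}

section SublevelThreshold

variable {f : ℝ → ℝ} {c : ℝ}

lemma sublevelThreshold_nonneg : 0 ≤ sublevelThreshold f c :=
  Real.sInf_nonneg fun _ hz => hz.1

lemma sublevelThreshold_mem (hf : Continuous f) (hne : ∃ z, 0 ≤ z ∧ f z ≤ c) :
    0 ≤ sublevelThreshold f c ∧ f (sublevelThreshold f c) ≤ c :=
  ((isClosed_le continuous_const continuous_id).inter
    (isClosed_le hf continuous_const)).csInf_mem hne ⟨0, fun _ hz => hz.1⟩

lemma sublevelThreshold_eq_zero (h0 : f 0 ≤ c) : sublevelThreshold f c = 0 :=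
  le_antisymm (csInf_le ⟨0, fun _ hz => hz.1⟩ ⟨le_rfl, h0⟩) sublevelThreshold_nonneg

lemma apply_sublevelThreshold_eq (hf : Continuous f) (hne : ∃ z, 0 ≤ z ∧ f z ≤ c)
    (h0 : c ≤ f 0) : f (sublevelThreshold f c) = c := by
  obtain ⟨hs0, hsc⟩ := sublevelThreshold_mem hf hne
  set s := sublevelThreshold f c
  refine le_antisymm hsc (not_lt.1 fun hlt => ?_)
  rcases hs0.eq_or_lt with hs | hs
  · rw [← hs] at hlt
    exact hlt.not_ge h0
  -- just below a positive `s` there are still admissible levels, contradicting minimality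
  have hbelow : ∀ᶠ z in 𝓝[<] s, z < s ∧ 0 < z ∧ f z < c :=
    eventually_mem_nhdsWithin.and <| nhdsWithin_le_nhds <|
      (lt_mem_nhds hs).and (hf.continuousAt.eventually_lt continuousAt_const hlt)
  obtain ⟨z, hzs, hz0, hzc⟩ := hbelow.exists
  exact hzs.not_ge (csInf_le ⟨0, fun _ hz => hz.1⟩ ⟨hz0.le, hzc.le⟩)

end SublevelThreshold

def clip (d a : ℝ) : ℝ := max (min a d) 0

section Clip

variable {d : ℝ}

lemma continuous_clip : Continuous (clip d) :=
  (continuous_id.min continuous_const).max continuous_const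

lemma clip_of_nonneg {a : ℝ} (ha : 0 ≤ a) (hd : 0 ≤ d) : clip d a = min a d :=
  max_eq_left (le_min ha hd)

lemma clip_of_nonpos {a : ℝ} (ha : a ≤ 0) : clip d a = 0 :=
  max_eq_right ((min_le_left _ _).trans ha)

lemma max_min_div_one_zero_mul (hd : 0 < d) (a : ℝ) :
    max (min (a / d) 1) 0 * d = clip d a := by
  rw [clip, ← div_self hd.ne', ← zero_div d, min_div_div_right hd.le,
    max_div_div_right hd.le, div_mul_cancel₀ _ hd.ne', zero_div]

lemma sub_clip_sub (a b : ℝ) : a - clip d (a - b) = min (max (a - d) b) a := by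
  simp only [clip, max_def, min_def]
  split_ifs <;> linarith

end Clip

def deliveredEnergy {ι : Type*} [Fintype ι] (x pbar : ι → ℝ) (Δt z : ℝ) : ℝ :=
  ∑ i, pbar i * clip Δt (x i - z)

section DeliveredEnergy

variable {ι : Type*} [Fintype ι] {x pbar : ι → ℝ} {Δt : ℝ}

lemma continuous_deliveredEnergy : Continuous (deliveredEnergy x pbar Δt) :=
  continuous_finsetSum _ fun _ _ =>
    continuous_const.mul (continuous_clip.comp (continuous_const.sub continuous_id))

lemma deliveredEnergy_eq_zero {z : ℝ} (hz : ∀ i, x i ≤ z) :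
    deliveredEnergy x pbar Δt z = 0 :=
  sum_eq_zero fun i _ => by rw [clip_of_nonpos (sub_nonpos.2 (hz i)), mul_zero]

lemma deliveredEnergy_zero (hx : ∀ i, 0 ≤ x i) (hΔt : 0 ≤ Δt) :
    deliveredEnergy x pbar Δt 0 = ∑ i, pbar i * min (x i) Δt :=
  sum_congr rfl fun i _ => by rw [sub_zero, clip_of_nonneg (hx i) hΔt]

lemma exists_deliveredEnergy_le (hx : ∀ i, 0 ≤ x i) {c : ℝ} (hc : 0 ≤ c) :
    ∃ z, 0 ≤ z ∧ deliveredEnergy x pbar Δt z ≤ c :=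
  ⟨∑ i, x i, sum_nonneg fun i _ => hx i,
    (deliveredEnergy_eq_zero fun i => single_le_sum (fun j _ => hx j) (mem_univ i)).le.trans hc⟩

end DeliveredEnergy

/-- Feasibility and exact delivery of the constant-input discrete policy:
with threshold `ẑ = inf {x̂ ≥ 0 : Σᵢ p̄ᵢ max {min {xᵢ − x̂, Δt}, 0} ≤ Pʳ Δt}`
and inputs `uᵢ = p̄ᵢ max {min {(xᵢ − ẑ)/Δt, 1}, 0}`:
(i) `0 ≤ uᵢ ≤ p̄ᵢ`; (ii) the final state `zᵢ = xᵢ − uᵢ Δt / p̄ᵢ` equals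
`min {max {xᵢ − Δt, ẑ}, xᵢ}` and is nonnegative; (iii) if
`Σᵢ p̄ᵢ min {xᵢ, Δt} ≥ Pʳ Δt` then `Σᵢ uᵢ = Pʳ`, otherwise
`Σᵢ uᵢ = Σᵢ p̄ᵢ min {xᵢ, Δt} / Δt`. -/
theorem constant_input_policy (n : ℕ) (x pbar : Fin n → ℝ)
    (hx : ∀ i, 0 ≤ x i) (hp : ∀ i, 0 < pbar i)
    (Δt : ℝ) (hΔt : 0 < Δt) (Pr : ℝ) (hPr : 0 ≤ Pr)
    (zhat : ℝ)
    (hzhat : zhat = sInf {z : ℝ | 0 ≤ z ∧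
      (∑ i, pbar i * max (min (x i - z) Δt) 0) ≤ Pr * Δt})
    (u : Fin n → ℝ)
    (hu : ∀ i, u i = pbar i * max (min ((x i - zhat) / Δt) 1) 0)
    (z : Fin n → ℝ)
    (hz : ∀ i, z i = x i - u i * Δt / pbar i) :
    (∀ i, 0 ≤ u i ∧ u i ≤ pbar i) ∧
    (∀ i, z i = min (max (x i - Δt) zhat) (x i) ∧ 0 ≤ z i) ∧
    (if Pr * Δt ≤ ∑ i, pbar i * min (x i) Δt
      then (∑ i, u i) = Pr
      else (∑ i, u i) = (∑ i, pbar i * min (x i) Δt) / Δt) := by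
  set F := deliveredEnergy x pbar Δt
  have hzhat : zhat = sublevelThreshold F (Pr * Δt) := hzhat
  have hne : ∃ z, 0 ≤ z ∧ F z ≤ Pr * Δt :=
    exists_deliveredEnergy_le hx (mul_nonneg hPr hΔt.le)
  have hF0 : F 0 = ∑ i, pbar i * min (x i) Δt := deliveredEnergy_zero hx hΔt.le
  have hu_mul : ∀ i, u i * Δt = pbar i * clip Δt (x i - zhat) := fun i => by
    rw [hu, mul_assoc, max_min_div_one_zero_mul hΔt]
  have hsum : (∑ i, u i) * Δt = F zhat := by
    rw [sum_mul]; exact sum_congr rfl fun i _ => hu_mul i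
  refine ⟨fun i => ?_, fun i => ?_, ?_⟩
  · rw [hu]
    exact ⟨mul_nonneg (hp i).le (le_max_right _ _),
      mul_le_of_le_one_right (hp i).le (max_le (min_le_right _ _) zero_le_one)⟩
  · have hzi : z i = min (max (x i - Δt) zhat) (x i) := by
      rw [hz, hu_mul, mul_div_cancel_left₀ _ (hp i).ne', sub_clip_sub]
    have hzhat0 : 0 ≤ zhat := hzhat ▸ sublevelThreshold_nonneg
    exact ⟨hzi, hzi ▸ le_min (hzhat0.trans (le_max_right _ _)) (hx i)⟩
  · split_ifs with hcase
    · have hF : F zhat = Pr * Δt :=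
        hzhat ▸ apply_sublevelThreshold_eq continuous_deliveredEnergy hne (hF0 ▸ hcase)
      exact mul_right_cancel₀ hΔt.ne' (hsum.trans hF)
    · have hzero : zhat = 0 :=
        hzhat ▸ sublevelThreshold_eq_zero (hF0 ▸ (not_le.1 hcase).le)
      rw [← hF0, ← hzero]
      exact eq_div_of_mul_eq hΔt.ne' hsum
end
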